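/- Let (P₀, Q₀) be a pair of orthogonal projections in generic position on H, set A = P₀ - Q₀, and let V₀ be the Davis symmetry of (P₀, Q₀), i.e., the symmetry commuting with P₀ + Q₀ - 1 such that V₀(P₀ + Q₀ - 1) is positive. Let Z₁, Z₂ ∈ B(H) satisfy Zᵢ* = -Zᵢ, Zᵢ A = A Zᵢ, Zᵢ V₀ = -V₀ Zᵢ, and ‖Zᵢ‖ < π/2 for i = 1, 2. If exp(Z₁) P₀ exp(-Z₁) = exp(Z₂) P₀ exp(-Z₂) and exp(Z₁) Q₀ exp(-Z₁) = exp(Z₂) Q₀ exp(-Z₂), then Z₁ = Z₂. -/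

import Mathlib

/-!
Put `u = exp (-Z₂) * exp Z₁`. The two conjugation identities say that `u` commutes with `P₀` and
`Q₀`, hence with `B = P₀ + Q₀ - 1` and with the positive square root `V₀ * B` of `B * B`. As `B` is
injective (generic position), `u` then commutes with `V₀`. Conjugation by `V₀` flips the sign of
each `Zᵢ`, so `V₀ * u * V₀ = exp Z₂ * exp (-Z₁)`; equating this with `u` gives
`exp (2 • Z₁) = exp (2 • Z₂)`, and `exp` is injective on skew-adjoint elements of norm `< π`.
-/

open ContinuousLinearMap

variable {H : Type*} [NormedAddCommGroup H] [InnerProductSpace ℂ H] [CompleteSpace H]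

/-- An orthogonal projection: a selfadjoint idempotent bounded operator. -/
def IsOrthogonalProjection (P : H →L[ℂ] H) : Prop :=
  IsSelfAdjoint P ∧ P * P = P

/-- A symmetry: a selfadjoint unitary operator. -/
def IsSymmetry (V : H →L[ℂ] H) : Prop :=
  IsSelfAdjoint V ∧ V * V = 1

/-- Two orthogonal projections are in generic position if the four canonical
intersections of their ranges and kernels are trivial. -/
def GenericPosition (P Q : H →L[ℂ] H) : Prop :=
  LinearMap.range (P : H →ₗ[ℂ] H) ⊓ LinearMap.range (Q : H →ₗ[ℂ] H) = ⊥ ∧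
  LinearMap.range (P : H →ₗ[ℂ] H) ⊓ LinearMap.ker (Q : H →ₗ[ℂ] H) = ⊥ ∧
  LinearMap.ker (P : H →ₗ[ℂ] H) ⊓ LinearMap.range (Q : H →ₗ[ℂ] H) = ⊥ ∧
  LinearMap.ker (P : H →ₗ[ℂ] H) ⊓ LinearMap.ker (Q : H →ₗ[ℂ] H) = ⊥

open NormedSpace

theorem commute_of_commute_mul_of_isLeftRegular {R : Type*} [Ring R] {u v b : R}
    (hb : IsLeftRegular b) (hub : Commute u b) (hvb : Commute v b) (h : Commute u (v * b)) :
    Commute u v := by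
  have hzero : (u * v - v * u) * b = 0 := by
    rw [sub_mul, mul_assoc, h.eq, mul_assoc, ← hub.eq, mul_assoc, sub_self]
  have hcomm : Commute b (u * v - v * u) :=
    (hub.symm.mul_right hvb.symm).sub_right (hvb.symm.mul_right hub.symm)
  exact sub_eq_zero.mp (hb (show b * (u * v - v * u) = b * 0 by rw [hcomm.eq, hzero, mul_zero]))

section BanachAlgebra

variable {𝔸 : Type*} [NormedRing 𝔸] [NormedAlgebra ℚ 𝔸] [CompleteSpace 𝔸]

theorem exp_mul_exp_neg (x : 𝔸) : exp x * exp (-x) = 1 := by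
  rw [← exp_add_of_commute (Commute.refl x).neg_right, add_neg_cancel, exp_zero]

theorem exp_neg_mul_exp (x : 𝔸) : exp (-x) * exp x = 1 := by
  rw [← exp_add_of_commute (Commute.refl x).neg_left, neg_add_cancel, exp_zero]

theorem commute_exp_neg_mul_exp_of_conj_eq {x y r : 𝔸}
    (h : exp x * r * exp (-x) = exp y * r * exp (-y)) : Commute (exp (-y) * exp x) r := by
  calc exp (-y) * exp x * r = exp (-y) * (exp x * r * exp (-x)) * exp x := by
        simp only [mul_assoc, exp_neg_mul_exp, mul_one]
    _ = r * (exp (-y) * exp x) := by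
        rw [h]; simp only [← mul_assoc, exp_neg_mul_exp, one_mul]

theorem exp_neg_mul_exp_eq_of_anticommute {v x y : 𝔸} (hv : v * v = 1)
    (hx : x * v = -(v * x)) (hy : y * v = -(v * y)) (h : Commute v (exp (-y) * exp x)) :
    exp (-y) * exp x = exp y * exp (-x) := by
  have hconj : SemiconjBy v (exp (-y) * exp x) (exp y * exp (-x)) :=
    (SemiconjBy.exp_right (by rw [SemiconjBy, mul_neg, hy])).mul_right
      (SemiconjBy.exp_right (by rw [SemiconjBy, neg_mul, hx, neg_neg]))
  calc exp (-y) * exp x = exp (-y) * exp x * (v * v) := by rw [hv, mul_one]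
    _ = exp y * exp (-x) * v * v := by rw [← mul_assoc, ← h.eq, hconj.eq]
    _ = exp y * exp (-x) := by rw [mul_assoc, hv, mul_one]

theorem exp_add_self_eq_of_exp_neg_mul_exp_eq {x y : 𝔸}
    (h : exp (-y) * exp x = exp y * exp (-x)) : exp (x + x) = exp (y + y) := by
  rw [exp_add_of_commute (Commute.refl x), exp_add_of_commute (Commute.refl y)]
  calc exp x * exp x = exp y * (exp (-y) * exp x) * exp x := by
        rw [← mul_assoc, exp_mul_exp_neg, one_mul]
    _ = exp y * exp y := by rw [h, mul_assoc, mul_assoc, exp_neg_mul_exp, mul_one]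

end BanachAlgebra

section CStarAlgebra

variable {A : Type*} [CStarAlgebra A]

theorem exp_injOn_skewAdjoint_ball :
    Set.InjOn (exp : A → A) ((skewAdjoint A : Set A) ∩ Metric.ball 0 Real.pi) := by
  -- `argSelfAdjoint` inverts `expUnitary x = exp (I • x)` on selfadjoint `x` with `‖x‖ < π`.
  have hI : ∀ a ∈ (skewAdjoint A : Set A) ∩ Metric.ball 0 Real.pi,
      ∃ x : selfAdjoint A, ‖x‖ < Real.pi ∧ Complex.I • (x : A) = a := by
    rintro a ⟨ha, hn⟩
    refine ⟨⟨-Complex.I • a, ?_⟩, ?_, ?_⟩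
    · rw [neg_smul]
      exact (IsSelfAdjoint.I_smul_of_mem_skewAdjoint (K := ℂ) ha).neg
    · simpa [norm_smul] using hn
    · simp [smul_smul]
  intro a ha b hb hab
  obtain ⟨x, hx, rfl⟩ := hI a ha
  obtain ⟨y, hy, rfl⟩ := hI b hb
  have : selfAdjoint.expUnitary x = selfAdjoint.expUnitary y := Subtype.ext (by simpa using hab)
  rw [← argSelfAdjoint_expUnitary hx, ← argSelfAdjoint_expUnitary hy, this]

theorem eq_of_exp_add_self_eq {a b : A} (ha : star a = -a) (hb : star b = -b)
    (ha' : ‖a‖ < Real.pi / 2) (hb' : ‖b‖ < Real.pi / 2) (h : exp (a + a) = exp (b + b)) :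
    a = b := by
  have hmem : ∀ c : A, star c = -c → ‖c‖ < Real.pi / 2 →
      c + c ∈ (skewAdjoint A : Set A) ∩ Metric.ball 0 Real.pi := fun c hc hc' =>
    ⟨skewAdjoint.mem_iff.mpr (by rw [star_add, hc, neg_add]),
      mem_ball_zero_iff.mpr ((norm_add_le c c).trans_lt (by linarith))⟩
  have := exp_injOn_skewAdjoint_ball (hmem a ha ha') (hmem b hb hb') h
  rwa [← two_smul ℂ, ← two_smul ℂ b, smul_right_inj two_ne_zero] at this

variable [PartialOrder A] [StarOrderedRing A]

theorem Commute.sqrt {a b : A} (h : Commute a b) : Commute (CFC.sqrt a) b :=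
  h.cfcₙ_nnreal _

theorem sqrt_mul_self_eq_mul_of_mul_self_eq_one {v b : A} (hv : v * v = 1) (hvb : Commute v b)
    (hpos : 0 ≤ v * b) : CFC.sqrt (b * b) = v * b :=
  CFC.sqrt_unique (by rw [← mul_assoc, mul_assoc v b v, ← hvb.eq, ← mul_assoc, hv, one_mul]) hpos

end CStarAlgebra

theorem ContinuousLinearMap.isLeftRegular_of_injective {R M : Type*} [Semiring R]
    [TopologicalSpace M] [AddCommMonoid M] [Module R M] {b : M →L[R] M}
    (hb : Function.Injective b) :
    IsLeftRegular b := fun _ _ h => ext fun x => hb (DFunLike.congr_fun h x)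

theorem GenericPosition.injective_add_sub_one {E : Type*} [NormedAddCommGroup E]
    [InnerProductSpace ℂ E] {P Q : E →L[ℂ] E} (hP : IsIdempotentElem P)
    (hQ : IsIdempotentElem Q) (h : GenericPosition P Q) : Function.Injective ⇑(P + Q - 1) := by
  have hker : ∀ {R S : E →L[ℂ] E} {x : E}, IsIdempotentElem S → R x + S x = x → S (R x) = 0 :=
    fun {R S x} hS hx => by
      rw [eq_sub_of_add_eq hx, map_sub, show S (S x) = S x from DFunLike.congr_fun hS.eq x,
        sub_self]
  rw [injective_iff_map_eq_zero]
  intro x hx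
  have hsum : P x + Q x = x := by simpa [sub_eq_zero] using hx
  have hPx : P x = 0 := by
    simpa [h.2.1] using Submodule.mem_inf.mpr ⟨LinearMap.mem_range_self (P : E →ₗ[ℂ] E) x,
      LinearMap.mem_ker.mpr (hker hQ hsum)⟩
  have hQx : Q x = 0 := by
    simpa [h.2.2.1] using Submodule.mem_inf.mpr
      ⟨LinearMap.mem_ker.mpr (hker hP ((add_comm _ _).trans hsum)),
        LinearMap.mem_range_self (Q : E →ₗ[ℂ] E) x⟩
  rw [← hsum, hPx, hQx, add_zero]

theorem horizontal_exponent_unique (P₀ Q₀ V₀ Z₁ Z₂ : H →L[ℂ] H)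
    (hP₀ : IsOrthogonalProjection P₀) (hQ₀ : IsOrthogonalProjection Q₀)
    (hgen : GenericPosition P₀ Q₀)
    (hV₀ : IsSymmetry V₀) (hV₀c : Commute V₀ (P₀ + Q₀ - 1))
    (hV₀p : (V₀ * (P₀ + Q₀ - 1)).IsPositive)
    (hZ₁s : star Z₁ = -Z₁)
    (hZ₁V : Z₁ * V₀ = -(V₀ * Z₁)) (hZ₁n : ‖Z₁‖ < Real.pi / 2)
    (hZ₂s : star Z₂ = -Z₂)
    (hZ₂V : Z₂ * V₀ = -(V₀ * Z₂)) (hZ₂n : ‖Z₂‖ < Real.pi / 2)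
    (hexpP : NormedSpace.exp Z₁ * P₀ * NormedSpace.exp (-Z₁) =
      NormedSpace.exp Z₂ * P₀ * NormedSpace.exp (-Z₂))
    (hexpQ : NormedSpace.exp Z₁ * Q₀ * NormedSpace.exp (-Z₁) =
      NormedSpace.exp Z₂ * Q₀ * NormedSpace.exp (-Z₂)) :
    Z₁ = Z₂ := by
  let +nondep : NormedAlgebra ℚ (H →L[ℂ] H) := .restrictScalars ℚ ℂ _
  set B := P₀ + Q₀ - 1
  set u := exp (-Z₂) * exp Z₁
  have huB : Commute u B :=
    ((commute_exp_neg_mul_exp_of_conj_eq hexpP).add_right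
      (commute_exp_neg_mul_exp_of_conj_eq hexpQ)).sub_right (Commute.one_right u)
  have huVB : Commute u (V₀ * B) := by
    rw [← sqrt_mul_self_eq_mul_of_mul_self_eq_one hV₀.2 hV₀c ((nonneg_iff_isPositive _).mpr hV₀p)]
    exact (huB.mul_right huB).symm.sqrt.symm
  have huV : Commute u V₀ := commute_of_commute_mul_of_isLeftRegular
    (isLeftRegular_of_injective (hgen.injective_add_sub_one hP₀.2 hQ₀.2)) huB hV₀c huVB
  exact eq_of_exp_add_self_eq hZ₁s hZ₂s hZ₁n hZ₂n (exp_add_self_eq_of_exp_neg_mul_exp_eq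
    (exp_neg_mul_exp_eq_of_anticommute hV₀.2 hZ₁V hZ₂V huV.symm))
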